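/- arXiv:1502.04231 — 4 statements merged into one kernel-verified Lean document; each statement's English description precedes it below -/
import Mathlib

section
/- Let X = (x₀, x₁, x₂) ∈ ℝ³ with 0 < x₀ < x₁ < x₂ and x₀, x₁, x₂ linearly independent over ℚ. Then for every run of the Smallest Vector Algorithm started at X, lim_{s→∞} max_{i=0,1,2} ‖gᵢ'⁽ˢ⁾‖ = +∞. -/
open Filter InnerProductGeometry Polynomial

noncomputable section

abbrev E3 := EuclideanSpace ℝ (Fin 3)

/-- Identify a plain function `Fin 3 → ℝ` with a point of Euclidean 3-space. -/
def toE3 (v : Fin 3 → ℝ) : E3 := (WithLp.equiv 2 (Fin 3 → ℝ)).symm v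

/-- The point of Euclidean 3-space attached to an integer vector. -/
def toR3 (v : Fin 3 → ℤ) : E3 := toE3 fun i => (v i : ℝ)

/-- Orthogonal projection of `h` onto the line `ℝ·X` (written `h''`). -/
def projL (X h : E3) : E3 := ((inner ℝ h X : ℝ) / ‖X‖ ^ 2) • X

/-- Orthogonal projection of `h` onto the plane `X^⊥` (written `h'`). -/
def projPl (X h : E3) : E3 := h - projL X h

/-- `gᵢ'` : projection of the `i`-th column onto the plane `X^⊥`. -/
def colP (X : E3) (g : Fin 3 → Fin 3 → ℤ) (i : Fin 3) : E3 := projPl X (toR3 (g i))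

/-- `gᵢ''` : projection of the `i`-th column onto the line `ℝ·X`. -/
def colL (X : E3) (g : Fin 3 → Fin 3 → ℤ) (i : Fin 3) : E3 := projL X (toR3 (g i))

def max3 (f : Fin 3 → ℝ) : ℝ := max (f 0) (max (f 1) (f 2))

def min3 (f : Fin 3 → ℝ) : ℝ := min (f 0) (min (f 1) (f 2))

/-- One step of the Smallest Vector Algorithm: from the columns `g` to the columns `g'`. -/
def SVAStep (X : E3) (g g' : Fin 3 → Fin 3 → ℤ) : Prop :=
  ∃ f : Fin 3 → Fin 3 → ℤ,
    ((min3 ![‖colP X g 1 - colP X g 0‖, ‖colP X g 2 - colP X g 1‖, ‖colP X g 2 - colP X g 0‖]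
        = ‖colP X g 1 - colP X g 0‖ ∧ f = ![g 0, g 1 - g 0, g 2]) ∨
     (min3 ![‖colP X g 1 - colP X g 0‖, ‖colP X g 2 - colP X g 1‖, ‖colP X g 2 - colP X g 0‖]
        = ‖colP X g 2 - colP X g 1‖ ∧ f = ![g 0, g 1, g 2 - g 1]) ∨
     (min3 ![‖colP X g 1 - colP X g 0‖, ‖colP X g 2 - colP X g 1‖, ‖colP X g 2 - colP X g 0‖]
        = ‖colP X g 2 - colP X g 0‖ ∧ f = ![g 0, g 1, g 2 - g 0])) ∧
    ∃ σ : Equiv.Perm (Fin 3), (∀ i, g' i = f (σ i)) ∧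
      ‖colL X g' 0‖ ≤ ‖colL X g' 1‖ ∧ ‖colL X g' 1‖ ≤ ‖colL X g' 2‖

/-- A run of the Smallest Vector Algorithm started at `X`: `g s i` is the `i`-th column of `G⁽ˢ⁾`. -/
def IsSVARun (X : E3) (g : ℕ → Fin 3 → Fin 3 → ℤ) : Prop :=
  (∀ i j, g 0 i j = if i = j then 1 else 0) ∧ ∀ s, SVAStep X (g s) (g (s + 1))

/-- The cofactor vector `X⁽ˢ⁾ = ᵀG⁽ˢ⁾·X`. -/
def cofVec (X : E3) (g : Fin 3 → Fin 3 → ℤ) (i : Fin 3) : ℝ := (inner ℝ (toR3 (g i)) X : ℝ)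

/-! The cofactors `⟨gᵢ, X⟩` stay positive and sorted along the run: each step replaces one of
them by its difference with a smaller one, which is positive (not just nonnegative) because the
coordinates of `X` are independent over `ℚ` and `G⁽ˢ⁾` stays invertible. Hence the cofactor sum
strictly decreases, so the matrices `G⁽ˢ⁾` are pairwise distinct, and it bounds every line
component `‖gᵢ''‖ = ⟨gᵢ, X⟩ / ‖X‖`. If the plane components stayed below a bound infinitely
often, infinitely many distinct integer matrices would lie in a bounded set. -/

lemma toR3_sub (v w : Fin 3 → ℤ) : toR3 (v - w) = toR3 v - toR3 w := by
  ext j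
  simp [toR3, toE3]

lemma inner_toR3 (v : Fin 3 → ℤ) (X : E3) : inner ℝ (toR3 v) X = ∑ j, (v j : ℝ) * X j := by
  simp [PiLp.inner_apply, toR3, toE3, mul_comm]

lemma eq_zero_of_inner_toR3_eq_zero {X : E3} (hind : LinearIndependent ℚ fun i : Fin 3 => X i)
    {v : Fin 3 → ℤ} (hv : inner ℝ (toR3 v) X = 0) : v = 0 := by
  funext i
  refine Fintype.linearIndependent_iff.mp (hind.restrict_scalars' ℤ) v ?_ i
  simpa [inner_toR3, zsmul_eq_mul] using hv

lemma norm_colL (X : E3) (g : Fin 3 → Fin 3 → ℤ) (i : Fin 3) :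
    ‖colL X g i‖ = |cofVec X g i| / ‖X‖ := by
  rcases eq_or_ne X 0 with rfl | hX
  · simp [colL, projL]
  rw [colL, projL, cofVec, norm_smul, Real.norm_eq_abs, abs_div, abs_of_nonneg (sq_nonneg ‖X‖)]
  field_simp

lemma norm_toR3_le (X : E3) (g : Fin 3 → Fin 3 → ℤ) (i : Fin 3) :
    ‖toR3 (g i)‖ ≤ ‖colP X g i‖ + ‖colL X g i‖ := by
  have : toR3 (g i) = colP X g i + colL X g i := by simp [colP, colL, projPl]
  exact this ▸ norm_add_le _ _

lemma finite_setOf_norm_toR3_le (R : ℝ) : {v : Fin 3 → ℤ | ‖toR3 v‖ ≤ R}.Finite := by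
  refine (isCompact_closedBall (0 : Fin 3 → ℤ) R).finite_of_discrete.subset fun v hv => ?_
  rw [mem_closedBall_zero_iff, pi_norm_le_iff_of_nonneg ((norm_nonneg _).trans hv)]
  intro j
  simpa [toR3, toE3, Int.norm_eq_abs] using (PiLp.norm_apply_le (toR3 v) j).trans hv

lemma le_max3 (f : Fin 3 → ℝ) (i : Fin 3) : f i ≤ max3 f := by
  fin_cases i <;> simp [max3]

lemma cofVec_update_sub (X : E3) (g : Fin 3 → Fin 3 → ℤ) (j k : Fin 3) :
    cofVec X (Function.update g j (g j - g k)) =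
      Function.update (cofVec X g) j (cofVec X g j - cofVec X g k) := by
  funext i
  rcases eq_or_ne i j with rfl | hij
  · simp [cofVec, toR3_sub, inner_sub_left]
  · simp [cofVec, hij]

lemma sum_cofVec_update_sub (X : E3) (g : Fin 3 → Fin 3 → ℤ) (j k : Fin 3) :
    ∑ i, cofVec X (Function.update g j (g j - g k)) i = ∑ i, cofVec X g i - cofVec X g k := by
  rw [cofVec_update_sub, Finset.sum_update_of_mem (Finset.mem_univ j),
    Finset.sum_eq_add_sum_sdiff_singleton_of_mem (Finset.mem_univ j) (cofVec X g)]
  ring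

lemma det_update_sub {j k : Fin 3} (g : Fin 3 → Fin 3 → ℤ) (hjk : j ≠ k) :
    (Matrix.of (Function.update g j (g j - g k))).det = (Matrix.of g).det := by
  rw [← Matrix.det_updateRow_add_smul_self (Matrix.of g) hjk (-1), neg_one_smul,
    ← sub_eq_add_neg]
  rfl

structure IsPositiveBasis (X : E3) (g : Fin 3 → Fin 3 → ℤ) : Prop where
  det_ne_zero : (Matrix.of g).det ≠ 0
  cofVec_pos : ∀ i, 0 < cofVec X g i

section Reduction

variable {X : E3} {g : Fin 3 → Fin 3 → ℤ} {j k : Fin 3}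

lemma cofVec_lt_of_le (hind : LinearIndependent ℚ fun i : Fin 3 => X i)
    (hdet : (Matrix.of g).det ≠ 0) (hjk : j ≠ k) (hkj : cofVec X g k ≤ cofVec X g j) :
    cofVec X g k < cofVec X g j := by
  refine hkj.lt_of_ne fun heq => hdet (Matrix.det_zero_of_row_eq hjk ?_)
  refine sub_eq_zero.mp (eq_zero_of_inner_toR3_eq_zero hind ?_)
  rw [toR3_sub, inner_sub_left]
  exact sub_eq_zero.mpr heq.symm

lemma IsPositiveBasis.update_sub (hg : IsPositiveBasis X g)
    (hind : LinearIndependent ℚ fun i : Fin 3 => X i) (hjk : j ≠ k)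
    (hkj : cofVec X g k ≤ cofVec X g j) :
    IsPositiveBasis X (Function.update g j (g j - g k)) where
  det_ne_zero := by rw [det_update_sub g hjk]; exact hg.det_ne_zero
  cofVec_pos i := by
    rw [cofVec_update_sub]
    rcases eq_or_ne i j with rfl | hij
    · simpa using cofVec_lt_of_le hind hg.det_ne_zero hjk hkj
    · simpa [hij] using hg.cofVec_pos i

lemma IsPositiveBasis.comp_perm (hg : IsPositiveBasis X g) (σ : Equiv.Perm (Fin 3)) :
    IsPositiveBasis X (g ∘ σ) where
  det_ne_zero := by
    rw [show (Matrix.of (g ∘ σ)).det = _ from Matrix.det_permute σ (Matrix.of g)]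
    exact mul_ne_zero (Equiv.Perm.sign σ).ne_zero hg.det_ne_zero
  cofVec_pos i := hg.cofVec_pos (σ i)

end Reduction

lemma monotone_cofVec_of_norm_colL_le {X : E3} {g : Fin 3 → Fin 3 → ℤ} (hX : X ≠ 0)
    (hpos : ∀ i, 0 < cofVec X g i) (h01 : ‖colL X g 0‖ ≤ ‖colL X g 1‖)
    (h12 : ‖colL X g 1‖ ≤ ‖colL X g 2‖) : Monotone (cofVec X g) := by
  have hX' : 0 < ‖X‖ := norm_pos_iff.mpr hX
  simp only [norm_colL, abs_of_pos (hpos _), div_le_div_iff_of_pos_right hX'] at h01 h12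
  rw [Fin.monotone_iff_le_succ]
  intro i
  fin_cases i
  exacts [h01, h12]

lemma SVAStep.isPositiveBasis {X : E3} {g g' : Fin 3 → Fin 3 → ℤ}
    (hind : LinearIndependent ℚ fun i : Fin 3 => X i) (hstep : SVAStep X g g')
    (hg : IsPositiveBasis X g) (hmono : Monotone (cofVec X g)) :
    IsPositiveBasis X g' ∧ Monotone (cofVec X g') ∧
      ∑ i, cofVec X g' i < ∑ i, cofVec X g i := by
  obtain ⟨f, hbranch, σ, hσ, h01, h12⟩ := hstep
  have reduce : ∀ j k : Fin 3, k < j → IsPositiveBasis X (Function.update g j (g j - g k)) ∧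
      ∑ i, cofVec X (Function.update g j (g j - g k)) i < ∑ i, cofVec X g i := fun j k hkj =>
    ⟨hg.update_sub hind hkj.ne' (hmono hkj.le),
      by rw [sum_cofVec_update_sub]; linarith [hg.cofVec_pos k]⟩
  obtain ⟨hf, hsum⟩ : IsPositiveBasis X f ∧ ∑ i, cofVec X f i < ∑ i, cofVec X g i := by
    -- the minimality condition selecting the difference plays no role here
    rcases hbranch with ⟨-, rfl⟩ | ⟨-, rfl⟩ | ⟨-, rfl⟩
    · rw [show ![g 0, g 1 - g 0, g 2] = Function.update g 1 (g 1 - g 0) by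
        funext i; fin_cases i <;> simp]
      exact reduce 1 0 (by decide)
    · rw [show ![g 0, g 1, g 2 - g 1] = Function.update g 2 (g 2 - g 1) by
        funext i; fin_cases i <;> simp]
      exact reduce 2 1 (by decide)
    · rw [show ![g 0, g 1, g 2 - g 0] = Function.update g 2 (g 2 - g 0) by
        funext i; fin_cases i <;> simp]
      exact reduce 2 0 (by decide)
  obtain rfl : g' = f ∘ σ := funext hσ
  have hf' := hf.comp_perm σ
  refine ⟨hf', monotone_cofVec_of_norm_colL_le ?_ hf'.cofVec_pos h01 h12, ?_⟩
  · rintro rfl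
    exact hind.ne_zero 0 rfl
  · exact (Equiv.sum_comp σ (cofVec X f)).trans_lt hsum

section Run

variable {X : E3} {g : ℕ → Fin 3 → Fin 3 → ℤ}

lemma IsSVARun.isPositiveBasis (hg : IsSVARun X g)
    (hind : LinearIndependent ℚ fun i : Fin 3 => X i) (h0 : 0 < X 0) (h01 : X 0 < X 1)
    (h12 : X 1 < X 2) (s : ℕ) : IsPositiveBasis X (g s) ∧ Monotone (cofVec X (g s)) := by
  induction s with
  | zero =>
    have hdet : Matrix.of (g 0) = 1 := by ext i j; simp [hg.1, Matrix.one_apply]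
    have hcof : cofVec X (g 0) = fun i => X i := by funext i; simp [cofVec, inner_toR3, hg.1]
    have hmono : StrictMono fun i : Fin 3 => X i := by
      rw [Fin.strictMono_iff_lt_succ]
      intro i
      fin_cases i
      exacts [h01, h12]
    refine ⟨⟨by simp [hdet], fun i => ?_⟩, hcof ▸ hmono.monotone⟩
    rw [hcof]
    exact h0.trans_le (hmono.monotone (Fin.zero_le i))
  | succ s ih =>
    obtain ⟨hpos, hmono, -⟩ := (hg.2 s).isPositiveBasis hind ih.1 ih.2
    exact ⟨hpos, hmono⟩

lemma IsSVARun.strictAnti_sum_cofVec (hg : IsSVARun X g)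
    (hind : LinearIndependent ℚ fun i : Fin 3 => X i) (h0 : 0 < X 0) (h01 : X 0 < X 1)
    (h12 : X 1 < X 2) : StrictAnti fun s => ∑ i, cofVec X (g s) i :=
  strictAnti_nat_of_succ_lt fun s =>
    let h := hg.isPositiveBasis hind h0 h01 h12 s
    ((hg.2 s).isPositiveBasis hind h.1 h.2).2.2

end Run

/-- Lemma 2: the projections on the plane become arbitrarily large. -/
theorem sva_proj_tendsto_atTop (Y : E3) (h0 : 0 < Y 0) (h01 : Y 0 < Y 1) (h12 : Y 1 < Y 2)
    (hind : LinearIndependent ℚ fun i : Fin 3 => Y i)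
    (g : ℕ → Fin 3 → Fin 3 → ℤ) (hg : IsSVARun Y g) :
    Filter.Tendsto (fun s => max3 fun i => ‖colP Y (g s) i‖) Filter.atTop Filter.atTop := by
  have hanti := hg.strictAnti_sum_cofVec hind h0 h01 h12
  set S := ∑ i, cofVec Y (g 0) i
  have hcol : ∀ s i, ‖toR3 (g s i)‖ ≤ max3 (fun i => ‖colP Y (g s) i‖) + S / ‖Y‖ := by
    intro s i
    have hpos := (hg.isPositiveBasis hind h0 h01 h12 s).1.cofVec_pos
    have hS : cofVec Y (g s) i ≤ S :=
      (Finset.single_le_sum (fun j _ => (hpos j).le) (Finset.mem_univ i)).trans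
        (hanti.antitone (Nat.zero_le s))
    calc ‖toR3 (g s i)‖ ≤ ‖colP Y (g s) i‖ + ‖colL Y (g s) i‖ := norm_toR3_le _ _ _
      _ ≤ _ := by
        rw [norm_colL, abs_of_pos (hpos i)]
        gcongr
        exact le_max3 (fun i => ‖colP Y (g s) i‖) i
  have hinj : Function.Injective g :=
    Function.Injective.of_comp (f := fun G => ∑ i, cofVec Y G i) hanti.injective
  rw [tendsto_atTop, ← Nat.cofinite_eq_atTop]
  intro b
  refine eventually_cofinite.mpr <|
    ((Set.Finite.pi fun _ => finite_setOf_norm_toR3_le (b + S / ‖Y‖)).preimage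
      hinj.injOn).subset fun s hs i _ => (hcol s i).trans ?_
  linarith [not_le.mp hs]

end
end

section
/- Let α, β be real numbers such that 1, α, β are linearly independent over ℚ, and set X = (1, α, β). For an integer vector h = (m, n, p), write X∙h = m + nα + pβ. Then the following six assertions are equivalent: (a) the infimum over integer triples (m,n,p) with (n,p) ≠ (0,0) of |X∙h| · (max(|n|,|p|))² is positive; (b) the infimum over integer triples (m,n,p) with m ≠ 0 of |m| · (max(|αm−n|,|βm−p|))² is positive; (a') the infimum over nonzero integer triples (m,n,p) of |X∙h| · (max(|m|,|n|,|p|))² is positive; (b') the infimum over nonzero integer triples (m,n,p) of max(|m|,|n|,|p|) · (max(|αm−n|,|βm−p|))² is positive; (A) the infimum over nonzero h ∈ ℤ³ of |X∙h| · ‖h‖² is positive; (B) the infimum over nonzero integer triples (m,n,p) of ‖h‖ · ((αm−n)² + (βm−p)²) is positive. -/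
open Filter InnerProductGeometry Polynomial

noncomputable section

/-!
Within each side the three conditions differ only in the heights used (`max(|n|, |p|)`, the sup
norm or the Euclidean norm of `h`; the sup or Euclidean norm of the approximation errors), and these
agree up to constants depending on `α, β`, except in degenerate cases where the product is at least
`1` anyway.

The transference (a) ⇔ (b) rests on one identity: if the integer vectors `h = (m, n, p)` and
`x = (x₀, x₁, x₂)` are orthogonal, then `x₀ (X∙h) = n (α x₀ - x₁) + p (β x₀ - x₂)`. Given a good
simultaneous approximation `x` (resp. a small value `X∙h`), Minkowski's linear forms theorem in a
box of side `s` with `s² = 2|x₀|` (resp. `s² = 2|X∙h|`) produces an orthogonal partner with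
`max(|n|, |p|) < s` (resp. with approximation errors `< s` and `x₀ ≠ 0`), and the identity yields
`c² ≤ 32 |x₀| err²` (resp. `c² ≤ 32 |X∙h| max(|n|, |p|)²`).
-/

open MeasureTheory Matrix

theorem Matrix.exists_ne_zero_abs_mulVec_intCast_lt {ι : Type*} [Fintype ι] [DecidableEq ι]
    (A : Matrix ι ι ℝ) (hA : A.det ≠ 0) (c : ι → ℝ) (hc : ∀ i, 0 < c i)
    (hdet : |A.det| < ∏ i, c i) :
    ∃ x : ι → ℤ, x ≠ 0 ∧ ∀ i, |(A *ᵥ fun j => (x j : ℝ)) i| < c i := by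
  set b := Pi.basisFun ℝ ι
  set box : Set (ι → ℝ) := Set.univ.pi fun i => Set.Ioo (-c i) (c i)
  set s := Matrix.toLin' A ⁻¹' box
  have hmem : ∀ v, v ∈ s ↔ ∀ i, |(A *ᵥ v) i| < c i := by
    simp [s, box, abs_lt]
  have hvol : volume (ZSpan.fundamentalDomain b) * 2 ^ Module.finrank ℝ (ι → ℝ) < volume s := by
    have hbox : volume box = ENNReal.ofReal (2 ^ Fintype.card ι * ∏ i, c i) := by
      simp only [box, volume_pi_pi, Real.volume_Ioo]
      rw [← ENNReal.ofReal_prod_of_nonneg fun i _ => by linarith [hc i]]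
      simp [← two_mul, Finset.prod_mul_distrib]
    rw [Measure.addHaar_preimage_linearMap _ (by rwa [LinearMap.det_toLin']), hbox,
      LinearMap.det_toLin', ZSpan.fundamentalDomain_pi_basisFun, volume_pi_pi]
    have hpos : 0 < |A.det| := abs_pos.mpr hA
    simp only [Real.volume_Ico, sub_zero, ENNReal.ofReal_one, Finset.prod_const_one, one_mul,
      Module.finrank_fintype_fun_eq_card, abs_inv]
    rw [← ENNReal.ofReal_mul (by positivity), ← ENNReal.ofReal_ofNat 2,
      ← ENNReal.ofReal_pow zero_le_two, ENNReal.ofReal_lt_ofReal_iff_of_nonneg (by positivity), inv_mul_eq_div, lt_div_iff₀ hpos]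
    exact mul_lt_mul_of_pos_left hdet (by positivity)
  have : Countable (Submodule.span ℤ (Set.range b)) := inferInstance
  obtain ⟨⟨x, hx⟩, hx0, hxs⟩ := exists_ne_zero_mem_lattice_of_measure_mul_two_pow_lt_measure
    (ZSpan.isAddFundamentalDomain' b volume) (fun v hv => by
      rw [hmem] at hv ⊢; simpa [Matrix.mulVec_neg] using hv)
    ((convex_pi fun i _ => convex_Ioo _ _).linear_preimage _) hvol
  have hint : ∀ i, ∃ z : ℤ, (z : ℝ) = x i := fun i => by
    simpa [b] using (b.mem_span_iff_repr_mem ℤ x).mp hx i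
  choose y hy using hint
  refine ⟨y, fun h0 => hx0 ?_, fun i => ?_⟩
  · ext i; simp [← hy, h0]
  · simpa only [hy] using (hmem x).mp hxs i

lemma one_le_abs_intCast {k : ℤ} (hk : k ≠ 0) : (1 : ℝ) ≤ |(k : ℝ)| := by
  exact_mod_cast Int.one_le_abs hk

lemma one_le_max_abs_intCast {n p : ℤ} (h : ¬(n = 0 ∧ p = 0)) :
    (1 : ℝ) ≤ max |(n : ℝ)| |(p : ℝ)| := by
  rcases not_and_or.mp h with hn | hp
  · exact (one_le_abs_intCast hn).trans (le_max_left _ _)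
  · exact (one_le_abs_intCast hp).trans (le_max_right _ _)

lemma eq_zero_of_abs_intCast_lt_one {k : ℤ} (h : |(k : ℝ)| < 1) : k = 0 :=
  Int.abs_lt_one_iff.mp (by exact_mod_cast h)

lemma exists_pos_le_of_forall_one_le_or_le_mul {S T : ℤ → ℤ → ℤ → Prop}
    {f g : ℤ → ℤ → ℤ → ℝ} {C : ℝ} (hC : 0 < C)
    (hfg : ∀ m n p, T m n p → 1 ≤ g m n p ∨ S m n p ∧ f m n p ≤ C * g m n p)
    (H : ∃ c : ℝ, 0 < c ∧ ∀ m n p, S m n p → c ≤ f m n p) :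
    ∃ c : ℝ, 0 < c ∧ ∀ m n p, T m n p → c ≤ g m n p := by
  obtain ⟨c, hc, hH⟩ := H
  refine ⟨min 1 (c / C), by positivity, fun m n p ht => ?_⟩
  rcases hfg m n p ht with hg | ⟨hs, hfg⟩
  · exact (min_le_left _ _).trans hg
  · refine (min_le_right _ _).trans ((div_le_iff₀ hC).2 ?_)
    linarith [hH m n p hs]

lemma max_abs_sq_le_sq_add_sq (a b : ℝ) : max |a| |b| ^ 2 ≤ a ^ 2 + b ^ 2 := by
  rcases max_choice |a| |b| with h | h <;> rw [h, sq_abs] <;> nlinarith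

lemma sq_add_sq_le_two_mul_max_abs_sq (a b : ℝ) : a ^ 2 + b ^ 2 ≤ 2 * max |a| |b| ^ 2 := by
  have ha := pow_le_pow_left₀ (abs_nonneg a) (le_max_left |a| |b|) 2
  have hb := pow_le_pow_left₀ (abs_nonneg b) (le_max_right |a| |b|) 2
  rw [sq_abs] at ha hb
  linarith

lemma norm_toR3_sq (m n p : ℤ) : ‖toR3 ![m, n, p]‖ ^ 2 = (m : ℝ) ^ 2 + n ^ 2 + p ^ 2 := by
  simp [toR3, toE3, EuclideanSpace.norm_sq_eq, Fin.sum_univ_three]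

lemma max_abs_le_norm_toR3 (m n p : ℤ) :
    max (max |(m : ℝ)| |(n : ℝ)|) |(p : ℝ)| ≤ ‖toR3 ![m, n, p]‖ := by
  have h := norm_toR3_sq m n p
  refine max_le (max_le ?_ ?_) ?_ <;> refine abs_le_of_sq_le_sq ?_ (norm_nonneg _) <;>
    nlinarith [sq_nonneg (m : ℝ), sq_nonneg (n : ℝ), sq_nonneg (p : ℝ)]

lemma norm_toR3_le_two_mul_max_abs (m n p : ℤ) :
    ‖toR3 ![m, n, p]‖ ≤ 2 * max (max |(m : ℝ)| |(n : ℝ)|) |(p : ℝ)| := by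
  set K := max (max |(m : ℝ)| |(n : ℝ)|) |(p : ℝ)|
  have hsq : ∀ {a : ℝ}, |a| ≤ K → a ^ 2 ≤ K ^ 2 := fun h =>
    sq_le_sq' (abs_le.mp h).1 (abs_le.mp h).2
  have hm := hsq (le_max_of_le_left (le_max_left |(m : ℝ)| |(n : ℝ)|))
  have hn := hsq (le_max_of_le_left (le_max_right |(m : ℝ)| |(n : ℝ)|))
  have hp := hsq (le_max_right (max |(m : ℝ)| |(n : ℝ)|) |(p : ℝ)|)
  refine (pow_le_pow_iff_left₀ (norm_nonneg _) (by positivity) two_ne_zero).1 ?_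
  rw [norm_toR3_sq, mul_pow]
  nlinarith [sq_nonneg K]

lemma exists_dot_eq_zero_of_abs_lt_sq {x y z : ℤ} (hx : x ≠ 0) {s : ℝ} (hs : 0 < s)
    (hxs : |(x : ℝ)| < s ^ 2) :
    ∃ m n p : ℤ, m * x + n * y + p * z = 0 ∧ ¬(n = 0 ∧ p = 0) ∧
      max |(n : ℝ)| |(p : ℝ)| < s := by
  obtain ⟨v, hv0, hv⟩ := exists_ne_zero_abs_mulVec_intCast_lt !![(x : ℝ), y, z; 0, 1, 0; 0, 0, 1]
    (by simpa [det_fin_three] using hx) ![1, s, s] (by simp [Fin.forall_fin_succ, hs])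
    (by simpa [det_fin_three, Fin.prod_univ_three, sq] using hxs)
  have h0 := hv 0
  have h1 := hv 1
  have h2 := hv 2
  simp only [mulVec, dotProduct, Fin.sum_univ_three] at h0 h1 h2
  simp only [Fin.isValue, of_apply, cons_val', cons_val_zero, cons_val_fin_one, cons_val_one,
    cons_val, zero_mul, one_mul, zero_add, add_zero] at h0 h1 h2
  have hdot : v 0 * x + v 1 * y + v 2 * z = 0 :=
    eq_zero_of_abs_intCast_lt_one (by push_cast; convert h0 using 2; ring)
  refine ⟨v 0, v 1, v 2, hdot, fun ⟨h1, h2⟩ => hv0 ?_, max_lt h1 h2⟩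
  have : v 0 = 0 := by simpa [h1, h2, hx] using hdot
  ext i; fin_cases i <;> simp [*]

lemma sq_le_of_le_mul_sq_of_mul_le {c A B E s : ℝ} (hc : 0 ≤ c) (hcA : c ≤ A * s ^ 2)
    (hAB : A * B ≤ 2 * s * E) (hs : s ^ 2 = 2 * B) : c ^ 2 ≤ 32 * B * E ^ 2 := by
  have hcE : c ≤ 4 * s * E := by rw [hs] at hcA; linarith
  calc c ^ 2 ≤ (4 * s * E) ^ 2 := pow_le_pow_left₀ hc hcE 2
    _ = 32 * B * E ^ 2 := by rw [mul_pow, mul_pow, hs]; ring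

section Transference

variable {α β : ℝ}

lemma linearForm_ne_zero (hind : LinearIndependent ℚ ![(1 : ℝ), α, β]) {m n p : ℤ}
    (h : ¬(m = 0 ∧ n = 0 ∧ p = 0)) : (m : ℝ) + n * α + p * β ≠ 0 := by
  intro h0
  have := Fintype.linearIndependent_iff.mp hind ![(m : ℚ), n, p]
    (by simp [Fin.sum_univ_three, Rat.smul_def, h0])
  exact h ⟨by simpa using this 0, by simpa using this 1, by simpa using this 2⟩

lemma abs_mul_abs_linearForm_le_of_dot_eq_zero {m n p x y z : ℤ}
    (h : m * x + n * y + p * z = 0) :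
    |(x : ℝ)| * |(m : ℝ) + n * α + p * β|
      ≤ 2 * max |(n : ℝ)| |(p : ℝ)| * max |α * x - y| |β * x - z| := by
  have hid : (x : ℝ) * (m + n * α + p * β) = n * (α * x - y) + p * (β * x - z) := by
    have : (m : ℝ) * x + n * y + p * z = 0 := by exact_mod_cast h
    linear_combination this
  rw [← abs_mul, hid]
  calc |(n : ℝ) * (α * x - y) + p * (β * x - z)|
      ≤ |(n : ℝ)| * |α * x - y| + |(p : ℝ)| * |β * x - z| := by
        simpa only [abs_mul] using abs_add_le ((n : ℝ) * (α * x - y)) (p * (β * x - z))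
    _ ≤ max |(n : ℝ)| |(p : ℝ)| * max |α * x - y| |β * x - z|
          + max |(n : ℝ)| |(p : ℝ)| * max |α * x - y| |β * x - z| := by
        gcongr <;> simp
    _ = _ := by ring

lemma exists_dot_eq_zero_approx {m n p : ℤ} (hL : (m : ℝ) + n * α + p * β ≠ 0) {s : ℝ}
    (hs : 0 < s) (hs1 : s ≤ 1) (hLs : |(m : ℝ) + n * α + p * β| < s ^ 2) :
    ∃ x y z : ℤ, m * x + n * y + p * z = 0 ∧ x ≠ 0 ∧ max |α * x - y| |β * x - z| < s := by
  have hdet : det !![(m : ℝ), n, p; α, -1, 0; β, 0, -1] = m + n * α + p * β := by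
    simp [det_fin_three]
  obtain ⟨v, hv0, hv⟩ := exists_ne_zero_abs_mulVec_intCast_lt !![(m : ℝ), n, p; α, -1, 0; β, 0, -1]
    (hdet ▸ hL) ![1, s, s] (by simp [Fin.forall_fin_succ, hs])
    (by simpa [hdet, Fin.prod_univ_three, sq] using hLs)
  have h0 := hv 0
  have h1 := hv 1
  have h2 := hv 2
  simp only [mulVec, dotProduct, Fin.sum_univ_three] at h0 h1 h2
  simp only [Fin.isValue, of_apply, cons_val', cons_val_zero, cons_val_fin_one, cons_val_one,
    cons_val, neg_mul, one_mul, zero_mul, add_zero] at h0 h1 h2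
  have hdot : m * v 0 + n * v 1 + p * v 2 = 0 :=
    eq_zero_of_abs_intCast_lt_one (by push_cast; exact h0)
  have hx : v 0 ≠ 0 := by
    intro hx
    have h1 : v 1 = 0 := eq_zero_of_abs_intCast_lt_one (by simpa [hx] using h1.trans_le hs1)
    have h2 : v 2 = 0 := eq_zero_of_abs_intCast_lt_one (by simpa [hx] using h2.trans_le hs1)
    exact hv0 (by ext i; fin_cases i <;> simp [*])
  exact ⟨v 0, v 1, v 2, hdot, hx, max_lt (by simpa [sub_eq_add_neg] using h1)
    (by simpa [sub_eq_add_neg] using h2)⟩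

theorem simultaneous_bound_of_linearForm_bound
    (H : ∃ c : ℝ, 0 < c ∧ ∀ m n p : ℤ, ¬(n = 0 ∧ p = 0) →
      c ≤ |(m : ℝ) + n * α + p * β| * (max |(n : ℝ)| |(p : ℝ)|) ^ 2) :
    ∃ c : ℝ, 0 < c ∧ ∀ m n p : ℤ, m ≠ 0 →
      c ≤ |(m : ℝ)| * (max |α * m - n| |β * m - p|) ^ 2 := by
  obtain ⟨c, hc, hH⟩ := H
  refine ⟨c ^ 2 / 32, by positivity, fun m n p hm => ?_⟩
  have hm1 := one_le_abs_intCast hm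
  set s := √(2 * |(m : ℝ)|)
  have hs : s ^ 2 = 2 * |(m : ℝ)| := Real.sq_sqrt (by positivity)
  have hs0 : 0 < s := Real.sqrt_pos.mpr (by positivity)
  obtain ⟨u, v, w, hdot, hvw, hvws⟩ :=
    exists_dot_eq_zero_of_abs_lt_sq (y := n) (z := p) hm hs0 (by linarith)
  have hcA : c ≤ |(u : ℝ) + v * α + w * β| * s ^ 2 :=
    (hH u v w hvw).trans (by gcongr)
  have hAB : |(u : ℝ) + v * α + w * β| * |(m : ℝ)| ≤ 2 * s * max |α * m - n| |β * m - p| := by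
    rw [mul_comm]
    refine (abs_mul_abs_linearForm_le_of_dot_eq_zero hdot).trans ?_
    gcongr
  linarith [sq_le_of_le_mul_sq_of_mul_le hc.le hcA hAB hs]

theorem linearForm_bound_of_simultaneous_bound (hind : LinearIndependent ℚ ![(1 : ℝ), α, β])
    (H : ∃ c : ℝ, 0 < c ∧ ∀ m n p : ℤ, m ≠ 0 →
      c ≤ |(m : ℝ)| * (max |α * m - n| |β * m - p|) ^ 2) :
    ∃ c : ℝ, 0 < c ∧ ∀ m n p : ℤ, ¬(n = 0 ∧ p = 0) →
      c ≤ |(m : ℝ) + n * α + p * β| * (max |(n : ℝ)| |(p : ℝ)|) ^ 2 := by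
  obtain ⟨c, hc, hH⟩ := H
  refine ⟨min (1 / 2) (c ^ 2 / 32), by positivity, fun m n p hnp => ?_⟩
  have hN := one_le_max_abs_intCast hnp
  set L := |(m : ℝ) + n * α + p * β|
  rcases le_or_gt (1 / 2) L with hL | hL
  · exact (min_le_left _ _).trans (by nlinarith)
  have hL0 : (m : ℝ) + n * α + p * β ≠ 0 := linearForm_ne_zero hind fun h => hnp h.2
  set s := √(2 * L)
  have hs : s ^ 2 = 2 * L := Real.sq_sqrt (by positivity)
  have hs0 : 0 < s := Real.sqrt_pos.mpr (by positivity)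
  have hs1 : s ≤ 1 := by nlinarith
  obtain ⟨x, y, z, hdot, hx, hxs⟩ :=
    exists_dot_eq_zero_approx hL0 hs0 hs1 (by linarith [abs_pos.mpr hL0])
  have hcA : c ≤ |(x : ℝ)| * s ^ 2 := (hH x y z hx).trans (by gcongr)
  have hAB : |(x : ℝ)| * L ≤ 2 * s * max |(n : ℝ)| |(p : ℝ)| := by
    refine (abs_mul_abs_linearForm_le_of_dot_eq_zero hdot).trans ?_
    rw [mul_right_comm]
    gcongr
  exact (min_le_right _ _).trans (by linarith [sq_le_of_le_mul_sq_of_mul_le hc.le hcA hAB hs])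

lemma max_abs_le_abs_linearForm {m n p : ℤ}
    (h : (1 + |α| + |β|) * max |(n : ℝ)| |(p : ℝ)| < |(m : ℝ)|) :
    max |(n : ℝ)| |(p : ℝ)| ≤ |(m : ℝ) + n * α + p * β| := by
  have hm : |(m : ℝ)| ≤ |(m : ℝ) + n * α + p * β| + |(n : ℝ)| * |α| + |(p : ℝ)| * |β| := by
    have := abs_add_three ((m : ℝ) + n * α + p * β) (-(n * α)) (-(p * β))
    rwa [abs_neg, abs_neg, abs_mul, abs_mul, show (m : ℝ) + n * α + p * β + -(n * α) + -(p * β) = m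
      by ring] at this
  have hn := mul_le_mul_of_nonneg_right (le_max_left |(n : ℝ)| |(p : ℝ)|) (abs_nonneg α)
  have hp := mul_le_mul_of_nonneg_right (le_max_right |(n : ℝ)| |(p : ℝ)|) (abs_nonneg β)
  nlinarith

lemma max_abs_le_mul_abs_of_max_abs_sub_lt_one {m n p : ℤ} (hm : m ≠ 0)
    (h : max |α * m - n| |β * m - p| < 1) :
    max (max |(m : ℝ)| |(n : ℝ)|) |(p : ℝ)| ≤ (1 + |α| + |β|) * |(m : ℝ)| := by
  have hm1 := one_le_abs_intCast hm
  have hn := abs_sub_comm (n : ℝ) (α * m) ▸ abs_sub_abs_le_abs_sub (n : ℝ) (α * m)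
  have hp := abs_sub_comm (p : ℝ) (β * m) ▸ abs_sub_abs_le_abs_sub (p : ℝ) (β * m)
  have hn1 := (le_max_left _ _).trans_lt h
  have hp1 := (le_max_right _ _).trans_lt h
  rw [abs_mul] at hn hp
  refine max_le (max_le ?_ ?_) ?_ <;> nlinarith [abs_nonneg α, abs_nonneg β]

theorem linearForm_supNorm_bound_of_linearForm_bound
    (H : ∃ c : ℝ, 0 < c ∧ ∀ m n p : ℤ, ¬(n = 0 ∧ p = 0) →
      c ≤ |(m : ℝ) + n * α + p * β| * (max |(n : ℝ)| |(p : ℝ)|) ^ 2) :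
    ∃ c : ℝ, 0 < c ∧ ∀ m n p : ℤ, ¬(m = 0 ∧ n = 0 ∧ p = 0) →
      c ≤ |(m : ℝ) + n * α + p * β| * (max (max |(m : ℝ)| |(n : ℝ)|) |(p : ℝ)|) ^ 2 := by
  refine exists_pos_le_of_forall_one_le_or_le_mul one_pos (fun m n p hmnp => ?_) H
  by_cases hnp : n = 0 ∧ p = 0
  · obtain ⟨rfl, rfl⟩ := hnp
    have hm := one_le_abs_intCast fun hm => hmnp ⟨hm, rfl, rfl⟩
    left
    simpa using one_le_mul_of_one_le_of_one_le hm (one_le_pow₀ (n := 2) hm)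
  · exact .inr ⟨hnp, by rw [one_mul]; gcongr; exact le_max_right _ _⟩

theorem linearForm_bound_of_linearForm_supNorm_bound
    (H : ∃ c : ℝ, 0 < c ∧ ∀ m n p : ℤ, ¬(m = 0 ∧ n = 0 ∧ p = 0) →
      c ≤ |(m : ℝ) + n * α + p * β| * (max (max |(m : ℝ)| |(n : ℝ)|) |(p : ℝ)|) ^ 2) :
    ∃ c : ℝ, 0 < c ∧ ∀ m n p : ℤ, ¬(n = 0 ∧ p = 0) →
      c ≤ |(m : ℝ) + n * α + p * β| * (max |(n : ℝ)| |(p : ℝ)|) ^ 2 := by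
  refine exists_pos_le_of_forall_one_le_or_le_mul (C := (1 + |α| + |β|) ^ 2) (by positivity)
    (fun m n p hnp => ?_) H
  have hN := one_le_max_abs_intCast hnp
  rcases lt_or_ge ((1 + |α| + |β|) * max |(n : ℝ)| |(p : ℝ)|) |(m : ℝ)| with hm | hm
  · have hL := max_abs_le_abs_linearForm hm
    left
    nlinarith
  · refine .inr ⟨fun h => hnp h.2, ?_⟩
    have hN' : max |(n : ℝ)| |(p : ℝ)| ≤ (1 + |α| + |β|) * max |(n : ℝ)| |(p : ℝ)| :=
      le_mul_of_one_le_left (by positivity) (by linarith [abs_nonneg α, abs_nonneg β])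
    have hK : max (max |(m : ℝ)| |(n : ℝ)|) |(p : ℝ)| ≤ (1 + |α| + |β|) * max |(n : ℝ)| |(p : ℝ)| :=
      max_le (max_le hm ((le_max_left _ _).trans hN')) ((le_max_right _ _).trans hN')
    rw [mul_left_comm, ← mul_pow]
    gcongr

theorem linearForm_norm_bound_of_linearForm_supNorm_bound
    (H : ∃ c : ℝ, 0 < c ∧ ∀ m n p : ℤ, ¬(m = 0 ∧ n = 0 ∧ p = 0) →
      c ≤ |(m : ℝ) + n * α + p * β| * (max (max |(m : ℝ)| |(n : ℝ)|) |(p : ℝ)|) ^ 2) :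
    ∃ c : ℝ, 0 < c ∧ ∀ m n p : ℤ, ¬(m = 0 ∧ n = 0 ∧ p = 0) →
      c ≤ |(m : ℝ) + n * α + p * β| * ‖toR3 ![m, n, p]‖ ^ 2 :=
  exists_pos_le_of_forall_one_le_or_le_mul one_pos (fun m n p h => .inr ⟨h, by
    rw [one_mul]; gcongr; exact max_abs_le_norm_toR3 m n p⟩) H

theorem linearForm_supNorm_bound_of_linearForm_norm_bound
    (H : ∃ c : ℝ, 0 < c ∧ ∀ m n p : ℤ, ¬(m = 0 ∧ n = 0 ∧ p = 0) →
      c ≤ |(m : ℝ) + n * α + p * β| * ‖toR3 ![m, n, p]‖ ^ 2) :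
    ∃ c : ℝ, 0 < c ∧ ∀ m n p : ℤ, ¬(m = 0 ∧ n = 0 ∧ p = 0) →
      c ≤ |(m : ℝ) + n * α + p * β| * (max (max |(m : ℝ)| |(n : ℝ)|) |(p : ℝ)|) ^ 2 :=
  exists_pos_le_of_forall_one_le_or_le_mul (C := 2 ^ 2) (by norm_num) (fun m n p h => .inr ⟨h, by
    rw [mul_left_comm, ← mul_pow]; gcongr; exact norm_toR3_le_two_mul_max_abs m n p⟩) H

theorem simultaneous_supNorm_bound_of_simultaneous_bound
    (H : ∃ c : ℝ, 0 < c ∧ ∀ m n p : ℤ, m ≠ 0 →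
      c ≤ |(m : ℝ)| * (max |α * m - n| |β * m - p|) ^ 2) :
    ∃ c : ℝ, 0 < c ∧ ∀ m n p : ℤ, ¬(m = 0 ∧ n = 0 ∧ p = 0) →
      c ≤ max (max |(m : ℝ)| |(n : ℝ)|) |(p : ℝ)| * (max |α * m - n| |β * m - p|) ^ 2 := by
  refine exists_pos_le_of_forall_one_le_or_le_mul one_pos (fun m n p hmnp => ?_) H
  by_cases hm : m = 0
  · subst hm
    have hN := one_le_max_abs_intCast fun h => hmnp ⟨rfl, h⟩
    left
    simpa using one_le_mul_of_one_le_of_one_le hN (one_le_pow₀ (n := 2) hN)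
  · exact .inr ⟨hm, by rw [one_mul]; gcongr; exact le_max_of_le_left (le_max_left _ _)⟩

theorem simultaneous_bound_of_simultaneous_supNorm_bound
    (H : ∃ c : ℝ, 0 < c ∧ ∀ m n p : ℤ, ¬(m = 0 ∧ n = 0 ∧ p = 0) →
      c ≤ max (max |(m : ℝ)| |(n : ℝ)|) |(p : ℝ)| * (max |α * m - n| |β * m - p|) ^ 2) :
    ∃ c : ℝ, 0 < c ∧ ∀ m n p : ℤ, m ≠ 0 →
      c ≤ |(m : ℝ)| * (max |α * m - n| |β * m - p|) ^ 2 := by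
  refine exists_pos_le_of_forall_one_le_or_le_mul (C := 1 + |α| + |β|) (by positivity)
    (fun m n p hm => ?_) H
  have hm1 := one_le_abs_intCast hm
  rcases le_or_gt 1 (max |α * m - n| |β * m - p|) with hD | hD
  · left
    simpa using one_le_mul_of_one_le_of_one_le hm1 (one_le_pow₀ (n := 2) hD)
  · refine .inr ⟨fun h => hm h.1, ?_⟩
    rw [← mul_assoc]
    gcongr
    exact max_abs_le_mul_abs_of_max_abs_sub_lt_one hm hD

theorem simultaneous_norm_bound_of_simultaneous_supNorm_bound
    (H : ∃ c : ℝ, 0 < c ∧ ∀ m n p : ℤ, ¬(m = 0 ∧ n = 0 ∧ p = 0) →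
      c ≤ max (max |(m : ℝ)| |(n : ℝ)|) |(p : ℝ)| * (max |α * m - n| |β * m - p|) ^ 2) :
    ∃ c : ℝ, 0 < c ∧ ∀ m n p : ℤ, ¬(m = 0 ∧ n = 0 ∧ p = 0) →
      c ≤ ‖toR3 ![m, n, p]‖ * ((α * m - n) ^ 2 + (β * m - p) ^ 2) :=
  exists_pos_le_of_forall_one_le_or_le_mul one_pos (fun m n p h => .inr ⟨h, by
    rw [one_mul]
    exact mul_le_mul (max_abs_le_norm_toR3 m n p) (max_abs_sq_le_sq_add_sq _ _) (by positivity)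
      (norm_nonneg _)⟩) H

theorem simultaneous_supNorm_bound_of_simultaneous_norm_bound
    (H : ∃ c : ℝ, 0 < c ∧ ∀ m n p : ℤ, ¬(m = 0 ∧ n = 0 ∧ p = 0) →
      c ≤ ‖toR3 ![m, n, p]‖ * ((α * m - n) ^ 2 + (β * m - p) ^ 2)) :
    ∃ c : ℝ, 0 < c ∧ ∀ m n p : ℤ, ¬(m = 0 ∧ n = 0 ∧ p = 0) →
      c ≤ max (max |(m : ℝ)| |(n : ℝ)|) |(p : ℝ)| * (max |α * m - n| |β * m - p|) ^ 2 :=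
  exists_pos_le_of_forall_one_le_or_le_mul (C := 2 * 2) (by norm_num) (fun m n p h => .inr ⟨h, by
    rw [mul_mul_mul_comm]
    exact mul_le_mul (norm_toR3_le_two_mul_max_abs m n p) (sq_add_sq_le_two_mul_max_abs_sq _ _)
      (by positivity) (by positivity)⟩) H

end Transference

/-- Lemma 7: Transference theorem in dimension 2. -/
theorem transference_dim2 (α β : ℝ)
    (hind : LinearIndependent ℚ ![(1 : ℝ), α, β]) :
    List.TFAE
      [ -- (a)
        (∃ c : ℝ, 0 < c ∧ ∀ m n p : ℤ, ¬(n = 0 ∧ p = 0) →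
          c ≤ |(m : ℝ) + n * α + p * β| * (max |(n : ℝ)| |(p : ℝ)|) ^ 2),
        -- (b)
        (∃ c : ℝ, 0 < c ∧ ∀ m n p : ℤ, m ≠ 0 →
          c ≤ |(m : ℝ)| * (max |α * m - n| |β * m - p|) ^ 2),
        -- (a')
        (∃ c : ℝ, 0 < c ∧ ∀ m n p : ℤ, ¬(m = 0 ∧ n = 0 ∧ p = 0) →
          c ≤ |(m : ℝ) + n * α + p * β| * (max (max |(m : ℝ)| |(n : ℝ)|) |(p : ℝ)|) ^ 2),
        -- (b')
        (∃ c : ℝ, 0 < c ∧ ∀ m n p : ℤ, ¬(m = 0 ∧ n = 0 ∧ p = 0) →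
          c ≤ max (max |(m : ℝ)| |(n : ℝ)|) |(p : ℝ)| * (max |α * m - n| |β * m - p|) ^ 2),
        -- (A)
        (∃ c : ℝ, 0 < c ∧ ∀ m n p : ℤ, ¬(m = 0 ∧ n = 0 ∧ p = 0) →
          c ≤ |(m : ℝ) + n * α + p * β| * ‖toR3 ![m, n, p]‖ ^ 2),
        -- (B)
        (∃ c : ℝ, 0 < c ∧ ∀ m n p : ℤ, ¬(m = 0 ∧ n = 0 ∧ p = 0) →
          c ≤ ‖toR3 ![m, n, p]‖ * ((α * m - n) ^ 2 + (β * m - p) ^ 2)) ] := by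
  tfae_have 1 → 2 := simultaneous_bound_of_linearForm_bound
  tfae_have 2 → 1 := linearForm_bound_of_simultaneous_bound hind
  tfae_have 1 → 3 := linearForm_supNorm_bound_of_linearForm_bound
  tfae_have 3 → 1 := linearForm_bound_of_linearForm_supNorm_bound
  tfae_have 3 → 5 := linearForm_norm_bound_of_linearForm_supNorm_bound
  tfae_have 5 → 3 := linearForm_supNorm_bound_of_linearForm_norm_bound
  tfae_have 2 → 4 := simultaneous_supNorm_bound_of_simultaneous_bound
  tfae_have 4 → 2 := simultaneous_bound_of_simultaneous_supNorm_bound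
  tfae_have 4 → 6 := simultaneous_norm_bound_of_simultaneous_supNorm_bound
  tfae_have 6 → 4 := simultaneous_supNorm_bound_of_simultaneous_norm_bound
  tfae_finish

end
end

section
/- Let X = (x₀, x₁, x₂) ∈ ℝ³ with 0 < x₀ < x₁ < x₂ and x₀, x₁, x₂ linearly independent over ℚ, and consider any run of the Smallest Vector Algorithm started at X. For every s ∈ T (i.e. every s with ‖g_III'⁽ˢ⁾‖ < ‖g_III'⁽ˢ⁺¹⁾‖), one has ‖g_II'⁽ˢ⁾‖ > (1/2)·‖g_III'⁽ˢ⁾‖, and for all i, j ∈ {0,1,2} with i ≠ j the undirected angle between gᵢ'⁽ˢ⁾ and gⱼ'⁽ˢ⁾ is strictly greater than π/3. -/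
open Filter InnerProductGeometry Polynomial

noncomputable section

/-!
A step of the algorithm replaces one projected column by the difference of two projected
columns at minimal distance, keeping the other two. So if the largest projected norm `M`
grows in that step, the minimal distance exceeds `M`: any two projected columns lie in the
disc of radius `M` but more than `M` apart. The triangle inequality then forces the middle one to
have norm more than `M / 2`, and the law of cosines forces every angle to exceed `π / 3`.
-/

/-- By the law of cosines, an angle of at most `π / 3` would give
`‖a - b‖² ≤ ‖a‖² + ‖b‖² - ‖a‖ ‖b‖ ≤ max ‖a‖ ‖b‖ ^ 2`. -/
theorem InnerProductGeometry.pi_div_three_lt_angle_of_lt_norm_sub {V : Type*}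
    [NormedAddCommGroup V] [InnerProductSpace ℝ V] {a b : V} {M : ℝ}
    (ha : ‖a‖ ≤ M) (hb : ‖b‖ ≤ M) (hab : M < ‖a - b‖) : Real.pi / 3 < angle a b := by
  by_contra! hle
  have hcos : 1 / 2 ≤ Real.cos (angle a b) := by
    rw [← Real.cos_pi_div_three]
    exact Real.cos_le_cos_of_nonneg_of_le_pi (angle_nonneg a b)
      (by linarith [Real.pi_pos]) hle
  have hlaw := norm_sub_sq_eq_norm_sq_add_norm_sq_sub_two_mul_norm_mul_norm_mul_cos_angle a b
  have hM : 0 ≤ M := (norm_nonneg a).trans ha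
  nlinarith [norm_nonneg a, norm_nonneg b, mul_nonneg (norm_nonneg a) (norm_nonneg b),
    mul_nonneg (sub_nonneg.2 ha) (sub_nonneg.2 hb), norm_nonneg (a - b)]

lemma max3_le {f : Fin 3 → ℝ} {a : ℝ} (h : ∀ i, f i ≤ a) : max3 f ≤ a :=
  max_le (h 0) (max_le (h 1) (h 2))

lemma min3_le (f : Fin 3 → ℝ) (i : Fin 3) : min3 f ≤ f i := by
  fin_cases i <;> simp [min3]

lemma projPl_toR3_sub (X : E3) (g : Fin 3 → Fin 3 → ℤ) (i j : Fin 3) :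
    projPl X (toR3 (g i - g j)) = colP X g i - colP X g j := by
  have hR3 : toR3 (g i - g j) = toR3 (g i) - toR3 (g j) := by
    ext k
    simp [toR3, toE3]
  simp only [hR3, colP, projPl, projL, inner_sub_left, sub_div, sub_smul]
  abel

lemma SVAStep.max3_norm_colP_le {X : E3} {g g' : Fin 3 → Fin 3 → ℤ} (h : SVAStep X g g') :
    (max3 fun i => ‖colP X g' i‖) ≤
      max (max3 fun i => ‖colP X g i‖)
        (min3 ![‖colP X g 1 - colP X g 0‖, ‖colP X g 2 - colP X g 1‖,
          ‖colP X g 2 - colP X g 0‖]) := by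
  obtain ⟨f, hf, τ, hτ, -⟩ := h
  set M := max3 fun i => ‖colP X g i‖
  set d := min3 ![‖colP X g 1 - colP X g 0‖, ‖colP X g 2 - colP X g 1‖,
    ‖colP X g 2 - colP X g 0‖]
  have hold : ∀ k, ‖projPl X (toR3 (g k))‖ ≤ max M d := fun k =>
    (le_max3 (fun i => ‖colP X g i‖) k).trans (le_max_left M d)
  suffices hf_le : ∀ k, ‖colP X f k‖ ≤ max M d from
    max3_le fun i => by simpa only [colP, hτ i] using hf_le (τ i)
  rcases hf with ⟨hmin, rfl⟩ | ⟨hmin, rfl⟩ | ⟨hmin, rfl⟩ <;> simp only [colP] at hmin <;>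
    intro k <;> fin_cases k <;> simp only [colP, Fin.reduceFinMk, Matrix.cons_val, projPl_toR3_sub] <;>
    first
    | (rw [← hmin]; exact le_max_right M d)
    | exact hold _

lemma SVAStep.max3_norm_colP_lt_norm_sub {X : E3} {g g' : Fin 3 → Fin 3 → ℤ}
    (h : SVAStep X g g')
    (hgrow : (max3 fun i => ‖colP X g i‖) < max3 fun i => ‖colP X g' i‖)
    {i j : Fin 3} (hij : i ≠ j) :
    (max3 fun i => ‖colP X g i‖) < ‖colP X g i - colP X g j‖ := by
  have hgap := (lt_max_iff.1 (hgrow.trans_le h.max3_norm_colP_le)).resolve_left (lt_irrefl _)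
  have hdist := fun k => hgap.trans_le (min3_le ![‖colP X g 1 - colP X g 0‖,
    ‖colP X g 2 - colP X g 1‖, ‖colP X g 2 - colP X g 0‖] k)
  have h10 := hdist 0
  have h21 := hdist 1
  have h20 := hdist 2
  simp only [Fin.isValue, Matrix.cons_val] at h10 h21 h20
  fin_cases i <;> fin_cases j <;> first
    | exact absurd rfl hij
    | assumption
    | rwa [norm_sub_rev]

theorem sva_geometry_on_T_general (Y : E3)
    (g : ℕ → Fin 3 → Fin 3 → ℤ) (hg : IsSVARun Y g) (s : ℕ)
    (hT : (max3 fun i => ‖colP Y (g s) i‖) < max3 fun i => ‖colP Y (g (s + 1)) i‖)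
    (σ : Equiv.Perm (Fin 3))
    (hσ : ‖colP Y (g s) (σ 0)‖ ≤ ‖colP Y (g s) (σ 1)‖ ∧
          ‖colP Y (g s) (σ 1)‖ ≤ ‖colP Y (g s) (σ 2)‖) :
    (1 / 2) * ‖colP Y (g s) (σ 2)‖ < ‖colP Y (g s) (σ 1)‖ ∧
    ∀ i j : Fin 3, i ≠ j →
      Real.pi / 3 < InnerProductGeometry.angle (colP Y (g s) i) (colP Y (g s) j) := by
  set p := colP Y (g s)
  have hgap : ∀ {i j : Fin 3}, i ≠ j → (max3 fun k => ‖p k‖) < ‖p i - p j‖ :=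
    (hg.2 s).max3_norm_colP_lt_norm_sub hT
  have hp_le : ∀ i, ‖p i‖ ≤ max3 fun k => ‖p k‖ := le_max3 _
  refine ⟨?_, fun i j hij => pi_div_three_lt_angle_of_lt_norm_sub (hp_le i) (hp_le j) (hgap hij)⟩
  calc (1 / 2) * ‖p (σ 2)‖ ≤ (1 / 2) * max3 fun k => ‖p k‖ := by gcongr; exact hp_le _
    _ < (1 / 2) * ‖p (σ 1) - p (σ 0)‖ := by gcongr; exact hgap (σ.injective.ne (by decide))
    _ ≤ (1 / 2) * (‖p (σ 1)‖ + ‖p (σ 0)‖) := by gcongr; exact norm_sub_le _ _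
    _ ≤ ‖p (σ 1)‖ := by linarith [hσ.1]

/-- Lemma: Geometry on `T`. -/
theorem sva_geometry_on_T (Y : E3) (h0 : 0 < Y 0) (h01 : Y 0 < Y 1) (h12 : Y 1 < Y 2)
    (hind : LinearIndependent ℚ fun i : Fin 3 => Y i)
    (g : ℕ → Fin 3 → Fin 3 → ℤ) (hg : IsSVARun Y g) (s : ℕ)
    (hT : (max3 fun i => ‖colP Y (g s) i‖) < max3 fun i => ‖colP Y (g (s + 1)) i‖)
    (σ : Equiv.Perm (Fin 3))
    (hσ : ‖colP Y (g s) (σ 0)‖ ≤ ‖colP Y (g s) (σ 1)‖ ∧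
          ‖colP Y (g s) (σ 1)‖ ≤ ‖colP Y (g s) (σ 2)‖) :
    (1 / 2) * ‖colP Y (g s) (σ 2)‖ < ‖colP Y (g s) (σ 1)‖ ∧
    ∀ i j : Fin 3, i ≠ j →
      Real.pi / 3 < InnerProductGeometry.angle (colP Y (g s) i) (colP Y (g s) j) :=
  sva_geometry_on_T_general Y g hg s hT σ hσ

end
end

section
/- Let (aₛ) and (bₛ) be sequences of vectors in the Euclidean plane with 0 < ‖bₛ‖ ≤ ‖aₛ‖ for every s, and for each s let ρₛ be the supremum of all r ≥ 0 such that the closed disk of radius r centered at 0 is contained in the convex hull of {aₛ, bₛ, −aₛ, −bₛ}. If lim_{s→∞} ρₛ/‖aₛ‖ = 0, then lim_{s→∞} sin(∠(aₛ, bₛ)) · ‖bₛ‖/‖aₛ‖ = 0, where ∠(aₛ, bₛ) denotes the undirected angle between aₛ and bₛ. -/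
/-!
Writing `a × b` for the determinant of `a, b`, one has `|a × b| = sin ∠(a, b) ‖a‖ ‖b‖`, and
Cramer's rule writes any `x` as `s a + t b` with `|s| + |t| ≤ ‖x‖ (‖a‖ + ‖b‖) / |a × b|`. So the
parallelogram `conv {±a, ±b}` contains the disk of radius `|a × b| / (‖a‖ + ‖b‖)`, which is at
least `sin ∠(a, b) ‖b‖ / 2` when `‖b‖ ≤ ‖a‖`. Hence `sin ∠(a, b) ‖b‖ / ‖a‖ ≤ 2 ρ / ‖a‖`.
-/

open Filter InnerProductGeometry Polynomial

noncomputable section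

abbrev E2 := EuclideanSpace ℝ (Fin 2)

/-- The inner radius at `0` of the symmetric parallelogram with vertices `±a, ±b`. -/
def pgramRadius (a b : E2) : ℝ :=
  sSup {r : ℝ | 0 ≤ r ∧ Metric.closedBall (0 : E2) r ⊆ convexHull ℝ {a, b, -a, -b}}

theorem mem_convexHull_of_abs_add_abs_le {V : Type*} [AddCommGroup V] [Module ℝ V]
    (a b : V) {s t : ℝ} (hst : |s| + |t| ≤ 1) :
    s • a + t • b ∈ convexHull ℝ ({a, b, -a, -b} : Set V) := by
  -- The slack `1 - |s| - |t|` is split evenly between `a` and `-a`.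
  set w : Fin 4 → ℝ := ![(|s| + s) / 2 + (1 - |s| - |t|) / 2, (|t| + t) / 2,
    (|s| - s) / 2 + (1 - |s| - |t|) / 2, (|t| - t) / 2]
  set z : Fin 4 → V := ![a, b, -a, -b]
  have hw_nonneg : ∀ i ∈ Finset.univ, 0 ≤ w i := by
    intro i _
    have := neg_abs_le s
    have := neg_abs_le t
    have := le_abs_self s
    have := le_abs_self t
    fin_cases i <;> simp [w] <;> linarith
  have hw_sum : ∑ i, w i = 1 := by
    simp only [w, Fin.sum_univ_four, Matrix.cons_val_zero, Matrix.cons_val_one,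
      Matrix.cons_val_two, Matrix.cons_val_three, Matrix.head_cons, Matrix.tail_cons]
    ring
  have hz_mem : ∀ i ∈ Finset.univ, z i ∈ convexHull ℝ ({a, b, -a, -b} : Set V) := by
    intro i _
    apply subset_convexHull
    fin_cases i <;> simp [z]
  have hcomb : ∑ i, w i • z i = s • a + t • b := by
    simp only [w, z, Fin.sum_univ_four, Matrix.cons_val_zero, Matrix.cons_val_one,
      Matrix.cons_val_two, Matrix.cons_val_three, Matrix.head_cons, Matrix.tail_cons]
    module
  simpa only [hcomb] using (convex_convexHull ℝ _).sum_mem hw_nonneg hw_sum hz_mem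

theorem convexHull_subset_closedBall {V : Type*} [SeminormedAddCommGroup V] [NormedSpace ℝ V]
    {a b : V} (hba : ‖b‖ ≤ ‖a‖) :
    convexHull ℝ ({a, b, -a, -b} : Set V) ⊆ Metric.closedBall 0 ‖a‖ := by
  refine convexHull_min ?_ (convex_closedBall 0 ‖a‖)
  rintro p (rfl | rfl | rfl | rfl) <;> simp [hba]

theorem le_of_closedBall_subset_closedBall {V : Type*} [NormedAddCommGroup V] [NormedSpace ℝ V]
    [Nontrivial V] {r R : ℝ} (hr : 0 ≤ r)
    (h : Metric.closedBall (0 : V) r ⊆ Metric.closedBall 0 R) : r ≤ R := by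
  obtain ⟨x, hx⟩ := exists_norm_eq V hr
  simpa [hx] using h (by simp [hx] : x ∈ Metric.closedBall (0 : V) r)

theorem le_pgramRadius {a b : E2} (hba : ‖b‖ ≤ ‖a‖) {r : ℝ} (hr : 0 ≤ r)
    (hball : Metric.closedBall (0 : E2) r ⊆ convexHull ℝ {a, b, -a, -b}) :
    r ≤ pgramRadius a b := by
  refine le_csSup ⟨‖a‖, ?_⟩ ⟨hr, hball⟩
  rintro r' ⟨hr', hball'⟩
  exact le_of_closedBall_subset_closedBall hr' (hball'.trans (convexHull_subset_closedBall hba))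

def cross (x y : E2) : ℝ := x 0 * y 1 - x 1 * y 0

theorem cross_sq_add_inner_sq (x y : E2) :
    cross x y ^ 2 + inner ℝ x y ^ 2 = ‖x‖ ^ 2 * ‖y‖ ^ 2 := by
  simp only [cross, EuclideanSpace.norm_sq_eq, PiLp.inner_apply, Fin.sum_univ_two,
    RCLike.inner_apply, conj_trivial, Real.norm_eq_abs, sq_abs]
  ring

theorem abs_cross_eq (x y : E2) :
    |cross x y| = Real.sin (angle x y) * (‖x‖ * ‖y‖) := by
  rw [sin_angle_mul_norm_mul_norm, real_inner_self_eq_norm_sq, real_inner_self_eq_norm_sq,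
    ← cross_sq_add_inner_sq]
  ring_nf
  exact (Real.sqrt_sq_eq_abs _).symm

theorem abs_cross_le (x y : E2) : |cross x y| ≤ ‖x‖ * ‖y‖ := by
  rw [abs_cross_eq]
  exact mul_le_of_le_one_left (by positivity) (Real.sin_le_one _)

theorem cross_smul_eq (a b x : E2) : cross a b • x = cross x b • a + cross a x • b := by
  ext i
  fin_cases i <;> simp [cross] <;> ring

theorem closedBall_subset_convexHull (a b : E2) {r : ℝ}
    (hr : r ≤ |cross a b| / (‖a‖ + ‖b‖)) :
    Metric.closedBall (0 : E2) r ⊆ convexHull ℝ {a, b, -a, -b} := by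
  intro x hx
  rw [mem_closedBall_zero_iff] at hx
  by_cases hc : cross a b = 0
  · have hx0 : x = 0 := norm_le_zero_iff.1 (by simpa [hc] using hx.trans hr)
    simpa [hx0] using mem_convexHull_of_abs_add_abs_le (s := 0) (t := 0) a b (by simp)
  have hc_pos : 0 < |cross a b| := abs_pos.2 hc
  have hab_pos : 0 < ‖a‖ + ‖b‖ := by
    by_contra! h
    have := abs_cross_le a b
    nlinarith [norm_nonneg a, norm_nonneg b]
  have hx_le : ‖x‖ * (‖a‖ + ‖b‖) ≤ |cross a b| := by
    rw [← le_div_iff₀ hab_pos]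
    exact hx.trans hr
  have hx_eq : x = (cross x b / cross a b) • a + (cross a x / cross a b) • b := by
    rw [div_eq_inv_mul, div_eq_inv_mul, mul_smul, mul_smul, ← smul_add, ← cross_smul_eq,
      inv_smul_smul₀ hc]
  rw [hx_eq]
  apply mem_convexHull_of_abs_add_abs_le
  rw [abs_div, abs_div, ← add_div, div_le_one hc_pos]
  have hxb := abs_cross_le x b
  have hax : |cross a x| ≤ ‖x‖ * ‖a‖ := by
    rw [mul_comm]
    exact abs_cross_le a x
  linarith

theorem sin_angle_mul_norm_le_two_mul_pgramRadius {a b : E2} (hba : ‖b‖ ≤ ‖a‖) :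
    Real.sin (angle a b) * ‖b‖ ≤ 2 * pgramRadius a b := by
  have hsin : 0 ≤ Real.sin (angle a b) := sin_angle_nonneg a b
  rw [← div_le_iff₀' two_pos]
  refine le_pgramRadius hba (by positivity) (closedBall_subset_convexHull a b ?_)
  have hnorm : ‖b‖ / 2 ≤ ‖a‖ * ‖b‖ / (‖a‖ + ‖b‖) := by
    rcases (norm_nonneg b).eq_or_lt with hb | hb
    · simp [← hb]
    rw [div_le_div_iff₀ two_pos (by positivity)]
    nlinarith
  rw [abs_cross_eq, mul_div_assoc, mul_div_assoc]
  exact mul_le_mul_of_nonneg_left hnorm hsin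

/-- Lemma: needling sequence of parallelograms. -/
theorem needling_parallelograms (a b : ℕ → E2)
    (hab : ∀ s, 0 < ‖b s‖ ∧ ‖b s‖ ≤ ‖a s‖)
    (hρ : Filter.Tendsto (fun s => pgramRadius (a s) (b s) / ‖a s‖) Filter.atTop (nhds 0)) :
    Filter.Tendsto
      (fun s => Real.sin (InnerProductGeometry.angle (a s) (b s)) * (‖b s‖ / ‖a s‖))
      Filter.atTop (nhds 0) := by
  refine squeeze_zero (fun s => ?_) (fun s => ?_) (by simpa using hρ.const_mul 2)
  · have := sin_angle_nonneg (a s) (b s)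
    positivity
  · rw [← mul_div_assoc, ← mul_div_assoc]
    exact div_le_div_of_nonneg_right (sin_angle_mul_norm_le_two_mul_pgramRadius (hab s).2)
      (norm_nonneg _)

end
end
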